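/- arXiv:math/0608263 — 2 statements merged into one kernel-verified Lean document; each statement's English description precedes it below -/
import Mathlib

section
/- Let q_ω be the root in (1,2) of x⁵ = x⁴ + x³ + x − 1 (numerically q_ω ≈ 1.68042). Then q_ω ∈ B_{ℵ₀}: the number x with expansion (100(10)^∞) in base q_ω, which also has the expansion (01111 00(10)^∞), has exactly countably infinitely many expansions in base q_ω. In particular B_{ℵ₀} ∩ (G, q_2) ≠ ∅, where q_2 is the root in (1,2) of x⁴ = 2x² + x + 1. -/
noncomputable section

/-- `a` is an expansion of `x` in base `q`: all digits `a n` lie in `{0,1}` and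
`x = Σ_{n≥1} a_n q^{-n}` (here `a n` is the `(n+1)`-st digit, i.e. indexing is 0-based). -/
def IsExpansion (q x : ℝ) (a : ℕ → ℕ) : Prop :=
  (∀ n, a n ≤ 1) ∧ x = ∑' n : ℕ, (a n : ℝ) / q ^ (n + 1)

/-- The set of expansions of `x` in base `q`. -/
def expansionsOf (q x : ℝ) : Set (ℕ → ℕ) := {a | IsExpansion q x a}

/-- `U_q`: the set of `x ∈ [0, 1/(q-1)]` having a unique expansion in base `q`. -/
def uniqueExpansionSet (q : ℝ) : Set ℝ :=
  {x | x ∈ Set.Icc 0 (1 / (q - 1)) ∧ ∃! a, IsExpansion q x a}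

/-- `B_m` (for finite `m`): bases `q ∈ (G, 2)` for which some `x ∈ I_q` has exactly `m`
expansions in base `q`. -/
def B (m : ℕ) : Set ℝ :=
  {q | q ∈ Set.Ioo ((1 + Real.sqrt 5) / 2) 2 ∧
    ∃ x ∈ Set.Icc (0:ℝ) (1 / (q - 1)), Cardinal.mk (expansionsOf q x) = m}

/-- `B_{ℵ₀}`: bases `q ∈ (G, 2)` for which some `x ∈ I_q` has exactly countably infinitely
many expansions in base `q`. -/
def Baleph0 : Set ℝ :=
  {q | q ∈ Set.Ioo ((1 + Real.sqrt 5) / 2) 2 ∧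
    ∃ x ∈ Set.Icc (0:ℝ) (1 / (q - 1)), Cardinal.mk (expansionsOf q x) = Cardinal.aleph0}

/-- The Thue–Morse sequence: `thueMorse n` is the parity of the number of 1s in the
binary expansion of `n`. -/
def thueMorse (n : ℕ) : ℕ := ((Nat.digits 2 n).count 1) % 2

/-- A digit `a m` of an expansion of `x` in base `q` is forced if every expansion of `x`
agreeing with `a` before position `m` also agrees at position `m`. -/
def Forced (q x : ℝ) (a : ℕ → ℕ) (m : ℕ) : Prop :=
  ∀ c : ℕ → ℕ, IsExpansion q x c → (∀ i < m, c i = a i) → c m = a m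

/-!
Reading a digit `d` off an expansion of `x` leaves an expansion of `q * x - d`, and every
expansion has its value in `[0, 1 / (q - 1)]`; so the digit is forced to be `0` when `q * x < 1`
and `1` when `1 / (q - 1) < q * x`. At `x = (q² + q + 1) / (q⁴ - 1)`, the value of `(0111)^∞`,
both first digits are possible. After a `0` the digits `111` are forced and `x` comes back; after
a `1` the digits `00` are forced and leave `q / (q² - 1)`, whose only expansion is `(10)^∞`
because `q` exceeds the golden ratio. So the expansions of `x` are `(0111)^∞` and the
`(0111)^k 100 (10)^∞`, `k ∈ ℕ`.
-/

open scoped Stream'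

theorem Stream'.eq_of_forall_exists_append {α : Type*} {P : Stream' α → Prop} {w : List α}
    (hw : w ≠ []) {s : Stream' α} (hs : s = w ++ₛ s) (h : ∀ a, P a → ∃ b, a = w ++ₛ b ∧ P b)
    {a : Stream' α} (ha : P a) : a = s := by
  funext n
  induction n using Nat.strong_induction_on generalizing a with
  | _ n ih =>
    obtain ⟨b, rfl, hb⟩ := h a ha
    show (w ++ₛ b).get n = s.get n
    rw [hs]
    rcases lt_or_ge n w.length with hn | hn
    · rw [Stream'.get_append_left _ _ _ hn, Stream'.get_append_left _ _ _ hn]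
    · obtain ⟨m, rfl⟩ := Nat.exists_eq_add_of_le hn
      rw [Stream'.get_append_right, Stream'.get_append_right]
      exact ih m (by simpa [Nat.pos_iff_ne_zero] using hw) hb

section Expansions

variable {q x : ℝ} {a : Stream' ℕ}

theorem digit_div_pow_le (hq : 0 < q) {d : ℕ} (hd : d ≤ 1) (n : ℕ) :
    (d : ℝ) / q ^ (n + 1) ≤ q⁻¹ ^ n * q⁻¹ := by
  rw [← pow_succ, inv_pow, div_eq_mul_inv]
  exact mul_le_of_le_one_left (by positivity) (by exact_mod_cast hd)

theorem summable_geometric_inv_mul_inv (hq : 1 < q) : Summable fun n : ℕ => q⁻¹ ^ n * q⁻¹ :=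
  (summable_geometric_of_lt_one (by positivity) (inv_lt_one_of_one_lt₀ hq)).mul_right _

theorem summable_digits (hq : 1 < q) (ha : ∀ n, a n ≤ 1) :
    Summable fun n => (a n : ℝ) / q ^ (n + 1) :=
  .of_nonneg_of_le (fun n => by positivity) (fun n => digit_div_pow_le (by linarith) (ha n) n)
    (summable_geometric_inv_mul_inv hq)

theorem IsExpansion.nonneg (hq : 0 < q) (h : IsExpansion q x a) : 0 ≤ x :=
  h.2 ▸ tsum_nonneg fun n => by positivity

theorem IsExpansion.le_inv_sub_one (hq : 1 < q) (h : IsExpansion q x a) : x ≤ 1 / (q - 1) := by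
  have hq0 : 0 < q := by linarith
  calc x = ∑' n, (a n : ℝ) / q ^ (n + 1) := h.2
    _ ≤ ∑' n : ℕ, q⁻¹ ^ n * q⁻¹ :=
      Summable.tsum_le_tsum (fun n => digit_div_pow_le hq0 (h.1 n) n) (summable_digits hq h.1)
        (summable_geometric_inv_mul_inv hq)
    _ = 1 / (q - 1) := by
      rw [tsum_mul_right, tsum_geometric_of_lt_one (by positivity) (inv_lt_one_of_one_lt₀ hq)]
      field_simp

theorem tsum_cons_div_pow (hq : 1 < q) {d : ℕ} (hd : d ≤ 1) {s : Stream' ℕ} (hs : ∀ n, s n ≤ 1) :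
    ∑' n, ((d :: s) n : ℝ) / q ^ (n + 1) = (d + ∑' n, (s n : ℝ) / q ^ (n + 1)) / q := by
  have hsum : Summable fun n => ((d :: s) n : ℝ) / q ^ (n + 1) :=
    summable_digits hq (by rintro (_ | n); exacts [hd, hs n])
  rw [hsum.tsum_eq_zero_add, add_div, ← tsum_div_const]
  congr 1
  · simp [Stream'.cons]
  · congr 1 with n
    rw [pow_succ, div_div]
    rfl

theorem isExpansion_cons_iff (hq : 1 < q) {d : ℕ} {s : Stream' ℕ} :
    IsExpansion q x (d :: s) ↔ d ≤ 1 ∧ IsExpansion q (q * x - d) s := by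
  have hq0 : q ≠ 0 := by positivity
  have hdigits : (∀ n, (d :: s) n ≤ 1) ↔ d ≤ 1 ∧ ∀ n, s n ≤ 1 :=
    ⟨fun h => ⟨h 0, fun n => h (n + 1)⟩, fun h => by rintro (_ | n); exacts [h.1, h.2 n]⟩
  unfold IsExpansion
  rw [hdigits, and_assoc]
  refine and_congr_right fun hd => and_congr_right fun hs => ?_
  rw [tsum_cons_div_pow hq hd hs, eq_div_iff hq0, sub_eq_iff_eq_add', mul_comm]

theorem IsExpansion.eq_cons (hq : 1 < q) (h : IsExpansion q x a) :
    (∃ b : Stream' ℕ, a = 0 :: b ∧ IsExpansion q (q * x) b) ∨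
      ∃ b : Stream' ℕ, a = 1 :: b ∧ IsExpansion q (q * x - 1) b := by
  rw [← Stream'.eta a, isExpansion_cons_iff hq] at h
  obtain ⟨hd, htail⟩ := h
  rcases Nat.le_one_iff_eq_zero_or_eq_one.1 hd with h0 | h1
  · exact .inl ⟨a.tail, by rw [← h0, Stream'.eta], by simpa [h0] using htail⟩
  · exact .inr ⟨a.tail, by rw [← h1, Stream'.eta], by simpa [h1] using htail⟩

theorem IsExpansion.eq_zero_cons (hq : 1 < q) (h : IsExpansion q x a) (hx : q * x < 1) :
    ∃ b : Stream' ℕ, a = 0 :: b ∧ IsExpansion q (q * x) b :=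
  (h.eq_cons hq).resolve_right fun ⟨_, _, hb⟩ => by linarith [hb.nonneg (by linarith)]

theorem IsExpansion.eq_one_cons (hq : 1 < q) (h : IsExpansion q x a) (hx : 1 / (q - 1) < q * x) :
    ∃ b : Stream' ℕ, a = 1 :: b ∧ IsExpansion q (q * x - 1) b :=
  (h.eq_cons hq).resolve_left fun ⟨_, _, hb⟩ => by linarith [hb.le_inv_sub_one hq]

def remainder (q x : ℝ) (w : List ℕ) : ℝ := w.foldl (fun y d => q * y - d) x

@[simp] theorem remainder_nil : remainder q x [] = x := rfl

@[simp] theorem remainder_cons (d : ℕ) (w : List ℕ) :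
    remainder q x (d :: w) = remainder q (q * x - d) w := rfl

theorem remainder_sub_remainder (w : List ℕ) (x y : ℝ) :
    remainder q x w - remainder q y w = q ^ w.length * (x - y) := by
  induction w generalizing x y with
  | nil => simp
  | cons d w ih =>
    rw [remainder_cons, remainder_cons, ih, List.length_cons, pow_succ]
    ring

theorem isExpansion_append_iff (hq : 1 < q) {w : List ℕ} {s : Stream' ℕ} :
    IsExpansion q x (w ++ₛ s) ↔ (∀ d ∈ w, d ≤ 1) ∧ IsExpansion q (remainder q x w) s := by
  induction w generalizing x with
  | nil => simp
  | cons d w ih =>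
    rw [Stream'.cons_append_stream, isExpansion_cons_iff hq, ih, List.forall_mem_cons, and_assoc,
      remainder_cons]

theorem isExpansion_of_eq_append_self (hq : 1 < q) {w : List ℕ} (hw : w ≠ []) {s : Stream' ℕ}
    (hs : s = w ++ₛ s) (hd : ∀ n, s n ≤ 1) (hx : remainder q x w = x) : IsExpansion q x s := by
  set v := ∑' n, (s n : ℝ) / q ^ (n + 1)
  have hv : IsExpansion q v s := ⟨hd, rfl⟩
  have hfix : remainder q v w = v := by
    have hv' := hv
    rw [hs, isExpansion_append_iff hq] at hv'
    exact hv'.2.2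
  -- reading `w` is affine with slope `q ^ w.length > 1`, so it has only one fixed point
  have hlen : 1 < q ^ w.length := one_lt_pow₀ hq (List.length_pos_iff.2 hw).ne'
  have hxv : x - v = q ^ w.length * (x - v) := by rw [← remainder_sub_remainder, hx, hfix]
  obtain rfl : x = v := by nlinarith
  exact hv

end Expansions

def cycle10 : Stream' ℕ := fun n => (n + 1) % 2

def cycle0111 : Stream' ℕ := fun n => if n % 4 = 0 then 0 else 1

def cycleExit : ℕ → Stream' ℕ
  | 0 => [1, 0, 0] ++ₛ cycle10
  | k + 1 => [0, 1, 1, 1] ++ₛ cycleExit k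

def value10 (q : ℝ) : ℝ := q / (q ^ 2 - 1)

def value0111 (q : ℝ) : ℝ := (q ^ 2 + q + 1) / (q ^ 4 - 1)

theorem cycle10_eq_append : cycle10 = [1, 0] ++ₛ cycle10 := by
  funext n
  rcases n with _ | _ | n
  · rfl
  · rfl
  · show (n + 2 + 1) % 2 = (n + 1) % 2
    omega

theorem cycle0111_eq_append : cycle0111 = [0, 1, 1, 1] ++ₛ cycle0111 := by
  funext n
  rcases n with _ | _ | _ | _ | n
  iterate 4 rfl
  show (if (n + 4) % 4 = 0 then 0 else 1) = if n % 4 = 0 then 0 else 1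
  simp

theorem cycleExit_injective : Function.Injective cycleExit := by
  intro k l h
  induction k generalizing l with
  | zero => cases l with
    | zero => rfl
    | succ l => exact (one_ne_zero (congrFun h 0)).elim
  | succ k ih => cases l with
    | zero => exact (one_ne_zero (congrFun h 0).symm).elim
    | succ l => exact congrArg _ (ih (Stream'.append_right_injective _ _ _ h))

section Algebra

variable {q : ℝ}

theorem add_one_lt_sq (hq : 1 < q) (hP : q ^ 5 = q ^ 4 + q ^ 3 + q - 1) : q + 1 < q ^ 2 := by
  have h : q ^ 3 * (q ^ 2 - q - 1) = q - 1 := by linear_combination hP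
  nlinarith [pow_pos (by linarith : (0:ℝ) < q) 3]

theorem lt_seventeen_tenths (hq : 1 < q) (hP : q ^ 5 = q ^ 4 + q ^ 3 + q - 1) : q < 17 / 10 := by
  by_contra! h
  have hs : (0:ℝ) ≤ q - 17 / 10 := by linarith
  nlinarith [pow_nonneg hs 2, pow_nonneg hs 3, pow_nonneg hs 4, pow_nonneg hs 5]

theorem seventeen_tenths_lt (hq : 1 < q) (h4 : q ^ 4 = 2 * q ^ 2 + q + 1) : 17 / 10 < q := by
  by_contra! h
  have h0 : (0:ℝ) < q := by linarith
  nlinarith [mul_nonneg (by linarith : (0:ℝ) ≤ 17/10 - q) (pow_pos h0 3).le,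
    mul_nonneg (by linarith : (0:ℝ) ≤ 17/10 - q) (pow_pos h0 2).le,
    mul_nonneg (by linarith : (0:ℝ) ≤ 17/10 - q) h0.le]

theorem goldenRatio_lt (hq : 0 < q) (hg : q + 1 < q ^ 2) : Real.goldenRatio < q := by
  nlinarith [Real.goldenRatio_sq, Real.one_lt_goldenRatio]

theorem remainder_value10 (hq : 1 < q) : remainder q (value10 q) [1, 0] = value10 q := by
  have h : q ^ 2 - 1 ≠ 0 := (sub_pos.2 (one_lt_pow₀ hq two_ne_zero)).ne'
  simp only [remainder_cons, remainder_nil, value10, Nat.cast_one, Nat.cast_zero, sub_zero]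
  field_simp
  ring

theorem remainder_value0111_one_zero_zero (hq : 1 < q) (hP : q ^ 5 = q ^ 4 + q ^ 3 + q - 1) :
    remainder q (value0111 q) [1, 0, 0] = value10 q := by
  have h2 : q ^ 2 - 1 ≠ 0 := (sub_pos.2 (one_lt_pow₀ hq two_ne_zero)).ne'
  have h4 : q ^ 4 - 1 ≠ 0 := (sub_pos.2 (one_lt_pow₀ hq four_ne_zero)).ne'
  simp only [remainder_cons, remainder_nil, value10, value0111, Nat.cast_one, Nat.cast_zero,
    sub_zero]
  field_simp
  linear_combination (1 - q ^ 2) * hP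

theorem remainder_value0111_zero_one_one_one (hq : 1 < q) :
    remainder q (value0111 q) [0, 1, 1, 1] = value0111 q := by
  have h4 : q ^ 4 - 1 ≠ 0 := (sub_pos.2 (one_lt_pow₀ hq four_ne_zero)).ne'
  simp only [remainder_cons, remainder_nil, value0111, Nat.cast_one, Nat.cast_zero, sub_zero]
  field_simp
  ring

end Algebra

section Classification

variable {q : ℝ} {a : Stream' ℕ}

theorem isExpansion_cycle10 (hq : 1 < q) : IsExpansion q (value10 q) cycle10 :=
  isExpansion_of_eq_append_self hq (List.cons_ne_nil _ _) cycle10_eq_append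
    (fun _ => Nat.le_of_lt_succ (Nat.mod_lt _ two_pos)) (remainder_value10 hq)

theorem isExpansion_cycle0111 (hq : 1 < q) : IsExpansion q (value0111 q) cycle0111 :=
  isExpansion_of_eq_append_self hq (List.cons_ne_nil _ _) cycle0111_eq_append
    (fun _ => by unfold cycle0111; split <;> omega) (remainder_value0111_zero_one_one_one hq)

theorem isExpansion_cycleExit (hq : 1 < q) (hP : q ^ 5 = q ^ 4 + q ^ 3 + q - 1) (k : ℕ) :
    IsExpansion q (value0111 q) (cycleExit k) := by
  induction k with
  | zero =>
    rw [cycleExit, isExpansion_append_iff hq, remainder_value0111_one_zero_zero hq hP]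
    exact ⟨by simp, isExpansion_cycle10 hq⟩
  | succ k ih =>
    rw [cycleExit, isExpansion_append_iff hq, remainder_value0111_zero_one_one_one hq]
    exact ⟨by simp, ih⟩

theorem eq_cycle10_of_isExpansion (hq : 1 < q) (hg : q + 1 < q ^ 2)
    (h : IsExpansion q (value10 q) a) : a = cycle10 := by
  have h2 : 0 < q ^ 2 - 1 := sub_pos.2 (one_lt_pow₀ hq two_ne_zero)
  have hfix : q * (q * value10 q - 1) = value10 q := by
    simpa using remainder_value10 hq
  have hlt : value10 q < 1 := by rw [value10, div_lt_one h2]; linarith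
  have hforced : 1 / (q - 1) < q * value10 q := by
    rw [value10, div_lt_iff₀ (by linarith), mul_div_assoc', div_mul_eq_mul_div, lt_div_iff₀ h2]
    nlinarith
  refine Stream'.eq_of_forall_exists_append (List.cons_ne_nil _ _) cycle10_eq_append
    (fun c hc => ?_) h
  obtain ⟨b, rfl, hb⟩ := hc.eq_one_cons hq hforced
  obtain ⟨b', rfl, hb'⟩ := hb.eq_zero_cons hq (by rwa [hfix])
  exact ⟨b', rfl, by rwa [hfix] at hb'⟩

theorem eq_cycleExit_zero_or_eq_append (hq : 1 < q) (hP : q ^ 5 = q ^ 4 + q ^ 3 + q - 1)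
    (h : IsExpansion q (value0111 q) a) :
    a = cycleExit 0 ∨ ∃ b, a = [0, 1, 1, 1] ++ₛ b ∧ IsExpansion q (value0111 q) b := by
  have hg := add_one_lt_sq hq hP
  have h4 : 0 < q ^ 4 - 1 := sub_pos.2 (one_lt_pow₀ hq four_ne_zero)
  have hq1 : 0 < q - 1 := by linarith
  rcases h.eq_cons hq with ⟨b, rfl, hb⟩ | ⟨b, rfl, hb⟩
  · have h1 : 1 / (q - 1) < q * (q * value0111 q) := by
      rw [value0111, div_lt_iff₀ hq1]; field_simp; nlinarith
    obtain ⟨c, rfl, hc⟩ := hb.eq_one_cons hq h1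
    have h2 : 1 / (q - 1) < q * (q * (q * value0111 q) - 1) := by
      rw [value0111, div_lt_iff₀ hq1]; field_simp; nlinarith
    obtain ⟨d, rfl, hd⟩ := hc.eq_one_cons hq h2
    have h3 : 1 / (q - 1) < q * (q * (q * (q * value0111 q) - 1) - 1) := by
      rw [value0111, div_lt_iff₀ hq1]; field_simp; nlinarith
    obtain ⟨e, rfl, he⟩ := hd.eq_one_cons hq h3
    have hfix : q * (q * (q * (q * value0111 q) - 1) - 1) - 1 = value0111 q := by
      simpa using remainder_value0111_zero_one_one_one hq
    exact .inr ⟨e, rfl, by rwa [hfix] at he⟩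
  · have h1 : q * (q * value0111 q - 1) < 1 := by
      rw [value0111]; field_simp; nlinarith
    obtain ⟨c, rfl, hc⟩ := hb.eq_zero_cons hq h1
    have hY : q * (q * (q * value0111 q - 1)) = value10 q := by
      simpa using remainder_value0111_one_zero_zero hq hP
    have h2 : q * (q * (q * value0111 q - 1)) < 1 := by
      rw [hY, value10, div_lt_one (by nlinarith)]; linarith
    obtain ⟨d, rfl, hd⟩ := hc.eq_zero_cons hq h2
    rw [hY] at hd
    exact .inl (by rw [eq_cycle10_of_isExpansion hq hg hd]; rfl)

theorem expansionsOf_value0111 (hq : 1 < q) (hP : q ^ 5 = q ^ 4 + q ^ 3 + q - 1) :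
    expansionsOf q (value0111 q) = insert cycle0111 (Set.range cycleExit) := by
  ext a
  refine ⟨fun h => ?_, ?_⟩
  · by_cases hexit : ∃ k, cycleExit k = a
    · exact .inr hexit
    refine .inl (Stream'.eq_of_forall_exists_append
      (P := fun c => IsExpansion q (value0111 q) c ∧ ∀ k, cycleExit k ≠ c)
      (List.cons_ne_nil _ _) cycle0111_eq_append ?_ ⟨h, not_exists.1 hexit⟩)
    rintro c ⟨hc, hne⟩
    rcases eq_cycleExit_zero_or_eq_append hq hP hc with rfl | ⟨b, rfl, hb⟩
    · exact (hne 0 rfl).elim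
    · exact ⟨b, rfl, hb, fun k hk => hne (k + 1) (by rw [cycleExit, hk])⟩
  · rintro (rfl | ⟨k, rfl⟩)
    exacts [isExpansion_cycle0111 hq, isExpansion_cycleExit hq hP k]

theorem mk_expansionsOf_value0111 (hq : 1 < q) (hP : q ^ 5 = q ^ 4 + q ^ 3 + q - 1) :
    Cardinal.mk (expansionsOf q (value0111 q)) = Cardinal.aleph0 := by
  rw [expansionsOf_value0111 hq hP]
  have hinf : (insert cycle0111 (Set.range cycleExit)).Infinite :=
    (Set.infinite_range_of_injective cycleExit_injective).mono (Set.subset_insert _ _)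
  exact le_antisymm ((Set.countable_range _).insert _).le_aleph0
    (@Cardinal.aleph0_le_mk _ hinf.to_subtype)

end Classification

theorem cycleExit_zero_apply (n : ℕ) :
    cycleExit 0 n = if n = 0 then 1 else if n < 3 then 0 else (n - 2) % 2 := by
  rcases n with _ | _ | _ | n
  iterate 3 rfl
  rw [if_neg (by omega), if_neg (by omega)]
  show (n + 1) % 2 = _
  omega

theorem cycleExit_one_apply (n : ℕ) :
    cycleExit 1 n = if n = 0 then 0 else if n < 5 then 1 else if n < 7 then 0 else (n - 6) % 2 := by
  rcases n with _ | _ | _ | _ | _ | _ | _ | n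
  iterate 7 rfl
  rw [if_neg (by omega), if_neg (by omega), if_neg (by omega)]
  show (n + 1) % 2 = _
  omega

theorem stmt12 (qom q2 : ℝ)
    (hqom : qom ∈ Set.Ioo (1:ℝ) 2)
    (hqomeq : qom ^ 5 = qom ^ 4 + qom ^ 3 + qom - 1)
    (hq2 : q2 ∈ Set.Ioo (1:ℝ) 2) (hq2eq : q2 ^ 4 = 2 * q2 ^ 2 + q2 + 1) :
    (∃ x ∈ Set.Icc (0:ℝ) (1 / (qom - 1)),
      IsExpansion qom x (fun n => if n = 0 then 1 else if n < 3 then 0 else (n - 2) % 2) ∧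
      IsExpansion qom x
        (fun n => if n = 0 then 0 else if n < 5 then 1 else if n < 7 then 0 else (n - 6) % 2) ∧
      Cardinal.mk (expansionsOf qom x) = Cardinal.aleph0) ∧
    qom ∈ Baleph0 ∧
    (Baleph0 ∩ Set.Ioo ((1 + Real.sqrt 5) / 2) q2).Nonempty := by
  obtain ⟨hq, hq_lt⟩ := hqom
  have h0 := isExpansion_cycleExit hq hqomeq 0
  have h1 := isExpansion_cycleExit hq hqomeq 1
  rw [funext cycleExit_zero_apply] at h0
  rw [funext cycleExit_one_apply] at h1
  have hmem : value0111 qom ∈ Set.Icc (0:ℝ) (1 / (qom - 1)) :=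
    ⟨h0.nonneg (by linarith), h0.le_inv_sub_one hq⟩
  have hcard := mk_expansionsOf_value0111 hq hqomeq
  have hgold := goldenRatio_lt (by linarith) (add_one_lt_sq hq hqomeq)
  have hB : qom ∈ Baleph0 := ⟨⟨hgold, hq_lt⟩, value0111 qom, hmem, hcard⟩
  refine ⟨⟨value0111 qom, hmem, h0, h1, hcard⟩, hB, qom, hB, hgold, ?_⟩
  exact (lt_seventeen_tenths hq hqomeq).trans (seventeen_tenths_lt hq2.1 hq2eq)
end
end

section
/- Let T be the real root of x³ = x² + x + 1. Then for every m ∈ ℕ with m ≥ 1 there exists x ∈ [0,1/(T-1)] having exactly m expansions in base T (explicitly, the number x_m with expansion 1(000)^m(10)^∞ has exactly m+1 expansions, namely (011)^j 1 (000)^{m−j} (10)^∞ for 0 ≤ j ≤ m), and there also exists x ∈ [0,1/(T-1)] having exactly countably infinitely many expansions in base T. In particular T ∈ B_m for every m ∈ ℕ ∪ {ℵ₀} with m ≥ 2. -/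
noncomputable section

/-- The digit sequence `(011)^j 1 (000)^{m-j} (10)^∞` (0-based indexing). -/
def tribSeq (m j : ℕ) : ℕ → ℕ := fun i =>
  if i < 3 * j then (if i % 3 = 0 then 0 else 1)
  else if i = 3 * j then 1
  else if i ≤ 3 * m then 0
  else (i - 3 * m) % 2

namespace S19

variable {T : ℝ}

lemma summable_aux (h1 : 1 < T) {a : ℕ → ℕ} (ha : ∀ n, a n ≤ 1) :
    Summable (fun n => (a n : ℝ) / T ^ (n + 1)) := by
  have hT0 : (0:ℝ) < T := by linarith
  have hg : Summable (fun n : ℕ => (1/T) ^ (n+1)) := by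
    have := (summable_geometric_of_lt_one (r := 1/T)
      (by positivity) (by rw [div_lt_one hT0]; exact h1))
    exact (summable_nat_add_iff 1).mpr this
  refine Summable.of_nonneg_of_le (fun n => by positivity) (fun n => ?_) hg
  rw [div_pow, one_pow]
  apply div_le_div_of_nonneg_right ?_ (by positivity)
  · exact_mod_cast ha n

lemma tsum_pow_le (h1 : 1 < T) : ∑' n : ℕ, ((1:ℝ)/T) ^ (n+1) = 1/(T-1) := by
  have hT0 : (0:ℝ) < T := by linarith
  have hr : (1/T) < 1 := by rw [div_lt_one hT0]; exact h1
  have hr0 : (0:ℝ) ≤ 1/T := by positivity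
  have : ∑' n : ℕ, ((1:ℝ)/T) ^ (n+1) = (1/T) * ∑' n : ℕ, ((1:ℝ)/T) ^ n := by
    rw [← tsum_mul_left]
    congr 1; ext n; rw [pow_succ, mul_comm]
  rw [this, tsum_geometric_of_lt_one hr0 hr]
  have e1 : (1:ℝ) - 1/T = (T-1)/T := by field_simp
  rw [e1, inv_div, div_mul_div_comm, one_mul]
  rw [div_eq_div_iff (by nlinarith) (by linarith)]
  ring

lemma exp_nonneg (h1 : 1 < T) {x a} (h : IsExpansion T x a) : 0 ≤ x := by
  rw [h.2]; exact tsum_nonneg fun n => by positivity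

lemma exp_le (h1 : 1 < T) {x a} (h : IsExpansion T x a) : x ≤ 1/(T-1) := by
  have hT0 : (0:ℝ) < T := by linarith
  rw [h.2, ← tsum_pow_le h1]
  refine Summable.tsum_le_tsum (fun n => ?_) (summable_aux h1 h.1) ?_
  · rw [div_pow, one_pow]
    apply div_le_div_of_nonneg_right ?_ (by positivity)
    exact_mod_cast h.1 n
  · exact ((summable_nat_add_iff 1).mpr (summable_geometric_of_lt_one
      (by positivity) (by rw [div_lt_one hT0]; exact h1)))

lemma exp_step (h1 : 1 < T) {x a} (h : IsExpansion T x a) :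
    IsExpansion T (T * x - a 0) (fun n => a (n + 1)) := by
  have hT0 : (0:ℝ) < T := by linarith
  refine ⟨fun n => h.1 _, ?_⟩
  have hs := summable_aux h1 h.1
  have h0 := h.2
  rw [Summable.tsum_eq_zero_add hs] at h0
  have ht : ∀ n : ℕ, (a (n+1) : ℝ) / T ^ (n+1+1) = ((a (n+1) : ℝ) / T ^ (n+1)) / T := by
    intro n; rw [div_div, ← pow_succ]
  have : x = (a 0 : ℝ) / T + (∑' n : ℕ, (a (n+1) : ℝ) / T ^ (n+1)) / T := by
    rw [h0, ← tsum_div_const]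
    congr 1
    · norm_num
    · exact tsum_congr ht
  rw [this]
  field_simp
  ring

lemma exp_zero_digit (h1 : 1 < T) {x a} (h : IsExpansion T x a) (hx : x < 1/T) :
    a 0 = 0 := by
  have hT0 : (0:ℝ) < T := by linarith
  have h2 := h.1 0
  interval_cases h0 : a 0
  · rfl
  · exfalso
    have := exp_nonneg h1 (exp_step h1 h)
    rw [h0] at this
    push_cast at this
    have : 1/T ≤ x := by rw [div_le_iff₀ hT0]; linarith [this]
    linarith

lemma exp_one_digit (h1 : 1 < T) {x a} (h : IsExpansion T x a)
    (hx : 1/(T*(T-1)) < x) : a 0 = 1 := by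
  have hT0 : (0:ℝ) < T := by linarith
  have h2 := h.1 0
  interval_cases h0 : a 0
  · exfalso
    have := exp_le h1 (exp_step h1 h)
    rw [h0] at this
    push_cast at this
    have hx2 : x ≤ 1/(T*(T-1)) := by
      rw [le_div_iff₀ (by nlinarith)]
      have : T * x ≤ 1/(T-1) := by linarith
      rw [le_div_iff₀ (by linarith)] at this
      nlinarith
    linarith
  · rfl

end S19

namespace S19

variable {T : ℝ}

def vl (T : ℝ) (a : ℕ → ℕ) : ℝ := ∑' n : ℕ, (a n : ℝ) / T ^ (n + 1)

lemma isExp_iff {x a} : IsExpansion T x a ↔ ((∀ n, a n ≤ 1) ∧ x = vl T a) := Iff.rfl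

lemma vl_succ (h1 : 1 < T) {a : ℕ → ℕ} (ha : ∀ n, a n ≤ 1) :
    vl T a = ((a 0 : ℝ) + vl T (fun n => a (n + 1))) / T := by
  have hT0 : (0:ℝ) < T := by linarith
  have := (exp_step h1 (⟨ha, rfl⟩ : IsExpansion T (vl T a) a)).2
  have h' : T * vl T a - (a 0 : ℝ) = vl T (fun n => a (n+1)) := this.symm.symm
  field_simp
  linarith

def pseq : ℕ → ℕ := fun i => if i % 2 = 0 then 1 else 0
def qseq : ℕ → ℕ := fun i => if i % 2 = 0 then 0 else 1

lemma pseq_le : ∀ n, pseq n ≤ 1 := by intro n; unfold pseq; split_ifs <;> omega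
lemma qseq_le : ∀ n, qseq n ≤ 1 := by intro n; unfold qseq; split_ifs <;> omega

lemma pseq_succ : (fun n => pseq (n+1)) = qseq := by
  funext i; simp only [pseq, qseq]; split_ifs <;> omega

lemma qseq_succ : (fun n => qseq (n+1)) = pseq := by
  funext i; simp only [pseq, qseq]; split_ifs <;> omega

lemma vl_pseq (h1 : 1 < T) (h8 : (1.8:ℝ) < T) : vl T pseq = T / (T^2 - 1) := by
  have hT0 : (0:ℝ) < T := by linarith
  have hd : (0:ℝ) < T^2 - 1 := by nlinarith
  have hp := vl_succ h1 pseq_le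
  have hq := vl_succ h1 qseq_le
  rw [pseq_succ] at hp
  rw [qseq_succ] at hq
  have hp0 : pseq 0 = 1 := rfl
  have hq0 : qseq 0 = 0 := rfl
  rw [hp0] at hp; rw [hq0] at hq
  push_cast at hp hq
  rw [hq] at hp
  rw [eq_div_iff (ne_of_gt hd)]
  field_simp at hp
  nlinarith [hp]

lemma vl_qseq (h1 : 1 < T) (h8 : (1.8:ℝ) < T) : vl T qseq = 1 / (T^2 - 1) := by
  have hT0 : (0:ℝ) < T := by linarith
  have hd : (0:ℝ) < T^2 - 1 := by nlinarith
  have hq := vl_succ h1 qseq_le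
  rw [qseq_succ, vl_pseq h1 h8] at hq
  rw [hq]
  have hq0 : qseq 0 = 0 := rfl
  rw [hq0]
  push_cast
  rw [zero_add]
  rw [div_eq_div_iff hT0.ne' hd.ne']
  field_simp


end S19

namespace S19

variable {T : ℝ}

section Numeric
variable (h8 : (1.8:ℝ) < T) (h9 : T < 1.9)

include h8 h9 in
lemma hTpos : (0:ℝ) < T := by linarith

include h8 in
lemma hquad : (0:ℝ) < T^2 - T - 1 := by nlinarith

include h8 in
lemma hd2 : (0:ℝ) < T^2 - 1 := by nlinarith

include h8 in
lemma hden : (0:ℝ) < T*(T-1) := by nlinarith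

include h8 h9 in
lemma num_v_gt : 1/(T*(T-1)) < T/(T^2-1) := by
  rw [div_lt_div_iff₀ (hden h8) (hd2 h8)]
  nlinarith

include h8 in
lemma num_u_lt : 1/(T^2-1) < 1/T := by
  rw [div_lt_div_iff₀ (hd2 h8) (by linarith)]
  nlinarith

include h8 in
lemma num_one_gt : 1/(T*(T-1)) < 1 := by
  rw [div_lt_one (hden h8)]
  nlinarith

include h8 h9 in
lemma num_tm1_gt (hq : T^3 = T^2 + T + 1) : 1/(T*(T-1)) < T - 1 := by
  rw [div_lt_iff₀ (hden h8)]
  nlinarith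

include h8 h9 in
lemma num_x0_gt : 1/(T*(T-1)) < 1/T + 1/(T^2-1) := by
  have hT0 : (0:ℝ) < T := by linarith
  have ha : (T-1)/(T^2-1) < 1/T := by
    rw [div_lt_div_iff₀ (hd2 h8) hT0]; nlinarith
  have hb : T/(T^2-1) = (T-1)/(T^2-1) + 1/(T^2-1) := by
    rw [← add_div]; ring_nf
  linarith [num_v_gt h8 h9]

include h8 in
lemma num_w_lt (k : ℕ) : T/(T^(k+1)*(T^2-1)) < 1/T := by
  have h1 : (0:ℝ) < T := by linarith
  have h3 : T ≤ T^(k+1) := le_self_pow₀ (by linarith) (by omega)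
  have hp : (0:ℝ) < T^(k+1) := by positivity
  rw [div_lt_div_iff₀ (mul_pos hp (hd2 h8)) h1]
  nlinarith [mul_le_mul_of_nonneg_right h3 (hd2 h8).le]

end Numeric

section Unique
variable (h8 : (1.8:ℝ) < T) (h9 : T < 1.9)

include h8 h9 in
lemma unique_pq : ∀ n : ℕ,
    (∀ c, IsExpansion T (T/(T^2-1)) c → c n = pseq n) ∧
    (∀ c, IsExpansion T (1/(T^2-1)) c → c n = qseq n) := by
  have h1 : (1:ℝ) < T := by linarith
  have hT0 : (0:ℝ) < T := by linarith
  intro n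
  induction n with
  | zero =>
    constructor
    · intro c hc
      exact exp_one_digit h1 hc (num_v_gt h8 h9)
    · intro c hc
      exact exp_zero_digit h1 hc (num_u_lt h8)
  | succ n ih =>
    constructor
    · intro c hc
      have h0 : c 0 = 1 := exp_one_digit h1 hc (num_v_gt h8 h9)
      have hstep := exp_step h1 hc
      rw [h0] at hstep
      have hne := (hd2 h8).ne'
      have hval : T * (T/(T^2-1)) - ((1:ℕ):ℝ) = 1/(T^2-1) := by
        push_cast
        field_simp
        ring
      rw [hval] at hstep
      have hth := ih.2 _ hstep
      have hpq : pseq (n+1) = qseq n := by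
        simp only [pseq, qseq]; split_ifs <;> omega
      rw [hpq]; exact hth
    · intro c hc
      have h0 : c 0 = 0 := exp_zero_digit h1 hc (num_u_lt h8)
      have hstep := exp_step h1 hc
      rw [h0] at hstep
      have hval : T * (1/(T^2-1)) - (0:ℕ) = T/(T^2-1) := by
        push_cast
        rw [mul_one_div, sub_zero]
      rw [hval] at hstep
      have hth := ih.1 _ hstep
      have hpq : qseq (n+1) = pseq n := by
        simp only [pseq, qseq]; split_ifs <;> omega
      rw [hpq]; exact hth

include h8 h9 in
lemma exp_v_eq_pseq {c} (hc : IsExpansion T (T/(T^2-1)) c) : c = pseq :=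
  funext fun n => (unique_pq h8 h9 n).1 c hc

def zp (k : ℕ) : ℕ → ℕ := fun i => if i < k then 0 else pseq (i - k)

lemma zp_le (k : ℕ) : ∀ n, zp k n ≤ 1 := by
  intro n; simp only [zp, pseq]; split_ifs <;> omega

lemma zp_zero : zp 0 = pseq := by
  funext i; simp [zp]

lemma zp_succ_tail (k : ℕ) : (fun n => zp (k+1) (n+1)) = zp k := by
  funext i; simp only [zp]; split_ifs with a b c <;> first | rfl | omega | (congr 1; omega)

include h8 h9 in
lemma unique_w : ∀ k : ℕ, ∀ c, IsExpansion T (T/(T^k*(T^2-1))) c → c = zp k := by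
  have h1 : (1:ℝ) < T := by linarith
  have hT0 : (0:ℝ) < T := by linarith
  intro k
  induction k with
  | zero =>
    intro c hc
    rw [zp_zero]
    apply exp_v_eq_pseq h8 h9
    simpa using hc
  | succ k ih =>
    intro c hc
    have h0 : c 0 = 0 := exp_zero_digit h1 hc (num_w_lt h8 k)
    have hstep := exp_step h1 hc
    rw [h0] at hstep
    have hne := (hd2 h8).ne'
    have hne2 : T ≠ 0 := by linarith
    have hval : T * (T/(T^(k+1)*(T^2-1))) - ((0:ℕ):ℝ) = T/(T^k*(T^2-1)) := by
      push_cast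
      rw [sub_zero]
      field_simp
      ring
    rw [hval] at hstep
    have htail := ih _ hstep
    funext i
    cases i with
    | zero => rw [h0]; simp [zp]
    | succ i =>
      have hthis : c (i+1) = zp k i := congrFun htail i
      exact hthis.trans (congrFun (zp_succ_tail k) i).symm

end Unique

end S19

namespace S19

variable {T : ℝ}

def xv (T : ℝ) (m : ℕ) : ℝ := 1/T + 1/(T^(3*m)*(T^2-1))

lemma trib_le (m j n : ℕ) : tribSeq m j n ≤ 1 := by
  simp only [tribSeq]; split_ifs <;> first | omega | exact False.elim (by assumption)

lemma trib_shift3 (m j : ℕ) : (fun i => tribSeq (m+1) (j+1) (i+3)) = tribSeq m j := by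
  funext i; simp only [tribSeq]; split_ifs <;> first | omega | exact False.elim (by assumption)

lemma trib_zero_tail (m : ℕ) : (fun n => tribSeq m 0 (n+1)) = zp (3*m) := by
  funext i; simp only [tribSeq, zp, pseq]; split_ifs <;> first | omega | exact False.elim (by assumption)

lemma trib_zero_head (m : ℕ) : tribSeq m 0 0 = 1 := by
  simp only [tribSeq]; split_ifs <;> first | omega | exact False.elim (by assumption)

lemma vl_zp (h1 : 1 < T) (h8 : (1.8:ℝ) < T) :
    ∀ k, vl T (zp k) = T/(T^k*(T^2-1)) := by
  have hT0 : (0:ℝ) < T := by linarith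
  have hne := (hd2 h8).ne'
  intro k
  induction k with
  | zero => rw [zp_zero, vl_pseq h1 h8]; norm_num
  | succ k ih =>
    have e := vl_succ h1 (zp_le (k+1))
    rw [zp_succ_tail k, ih] at e
    have h0 : zp (k+1) 0 = 0 := by simp [zp]
    rw [h0] at e
    push_cast at e
    rw [e]
    have hp : (T:ℝ)^k ≠ 0 := by positivity
    field_simp
    ring

lemma vl_trib0 (h1 : 1 < T) (h8 : (1.8:ℝ) < T) (m : ℕ) :
    vl T (tribSeq m 0) = xv T m := by
  have hT0 : (0:ℝ) < T := by linarith
  have hne := (hd2 h8).ne'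
  have e := vl_succ h1 (trib_le m 0)
  rw [trib_zero_tail m, vl_zp h1 h8, trib_zero_head m] at e
  push_cast at e
  rw [e]
  have hp : (T:ℝ)^(3*m) ≠ 0 := by positivity
  unfold xv
  field_simp

lemma vl_trib (h1 : 1 < T) (h8 : (1.8:ℝ) < T) (hq : T^3 = T^2 + T + 1) :
    ∀ m j, j ≤ m → vl T (tribSeq m j) = xv T m := by
  have hT0 : (0:ℝ) < T := by linarith
  have hne := (hd2 h8).ne'
  intro m
  induction m with
  | zero =>
    intro j hj
    interval_cases j
    exact vl_trib0 h1 h8 0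
  | succ m ih =>
    intro j hj
    match j with
    | 0 => exact vl_trib0 h1 h8 (m+1)
    | j + 1 =>
      have hjm : j ≤ m := by omega
      set a := tribSeq (m+1) (j+1) with ha
      have ha0 : a 0 = 0 := by simp only [ha, tribSeq]; split_ifs <;> first | omega | exact False.elim (by assumption)
      have ha1 : a 1 = 1 := by simp only [ha, tribSeq]; split_ifs <;> first | omega | exact False.elim (by assumption)
      have ha2 : a 2 = 1 := by simp only [ha, tribSeq]; split_ifs <;> first | omega | exact False.elim (by assumption)
      have e1 : vl T a = ((a 0 : ℝ) + vl T (fun n => a (n+1)))/T :=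
        vl_succ h1 (trib_le (m+1) (j+1))
      have e2 : vl T (fun n => a (n+1)) = ((a 1 : ℝ) + vl T (fun n => a (n+2)))/T :=
        vl_succ h1 (fun n => trib_le (m+1) (j+1) (n+1))
      have e3 : vl T (fun n => a (n+2)) = ((a 2 : ℝ) + vl T (fun n => a (n+3)))/T :=
        vl_succ h1 (fun n => trib_le (m+1) (j+1) (n+2))
      have e4 : (fun n => a (n+3)) = tribSeq m j := trib_shift3 m j
      rw [e2, e3, e4, ih j hjm, ha0, ha1, ha2] at e1
      push_cast at e1
      rw [e1]
      unfold xv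
      have hp : (T:ℝ)^(3*m) ≠ 0 := by positivity
      have hpow : T^(3*(m+1)) = T^(3*m)*T^3 := by
        rw [show 3*(m+1) = 3*m+3 from by ring, pow_add]
      rw [hpow]
      field_simp
      linear_combination (T^(3*m) * (1 - T^2)) * hq

end S19

namespace S19

variable {T : ℝ}

section Classify
variable (h8 : (1.8:ℝ) < T) (h9 : T < 1.9) (hq : T^3 = T^2 + T + 1)

include h8 in
lemma alg0 (m : ℕ) : T * xv T m - ((1:ℕ):ℝ) = T/(T^(3*m)*(T^2-1)) := by
  have hT0 : (0:ℝ) < T := by linarith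
  have hne := (hd2 h8).ne'
  have hp : (T:ℝ)^(3*m) ≠ 0 := by positivity
  push_cast
  unfold xv
  field_simp
  ring

include h8 in
lemma alg1 (m : ℕ) : T * xv T (m+1) - ((0:ℕ):ℝ) = 1 + T/(T^(3*(m+1))*(T^2-1)) := by
  have hT0 : (0:ℝ) < T := by linarith
  have hne := (hd2 h8).ne'
  have hp : (T:ℝ)^(3*(m+1)) ≠ 0 := by positivity
  push_cast
  unfold xv
  field_simp
  ring

include h8 in
lemma alg2 (m : ℕ) : T * (1 + T/(T^(3*(m+1))*(T^2-1))) - ((1:ℕ):ℝ)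
    = (T-1) + T/(T^(3*m+2)*(T^2-1)) := by
  have hT0 : (0:ℝ) < T := by linarith
  have hne := (hd2 h8).ne'
  have hp : (T:ℝ)^(3*m) ≠ 0 := by positivity
  have hpow : T^(3*(m+1)) = T^(3*m+2)*T := by
    rw [show 3*(m+1) = (3*m+2)+1 from by ring, pow_succ]
  push_cast
  rw [hpow]
  have hp2 : (T:ℝ)^(3*m+2) ≠ 0 := by positivity
  field_simp
  ring

include h8 in
lemma alg3 (hq : T^3 = T^2 + T + 1) (m : ℕ) :
    T * ((T-1) + T/(T^(3*m+2)*(T^2-1))) - ((1:ℕ):ℝ) = xv T m := by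
  have hT0 : (0:ℝ) < T := by linarith
  have hne := (hd2 h8).ne'
  have hp : (T:ℝ)^(3*m) ≠ 0 := by positivity
  have hpow : T^(3*m+2) = T^(3*m)*T^2 := by rw [pow_add]
  push_cast
  rw [hpow]
  unfold xv
  field_simp
  linear_combination (T^(3*m) * (T^2 - 1)) * hq

include h8 in
lemma w_pos (k : ℕ) : (0:ℝ) < T/(T^k*(T^2-1)) := by
  have hT0 : (0:ℝ) < T := by linarith
  exact div_pos hT0 (mul_pos (by positivity) (hd2 h8))

include h8 h9 hq in
lemma classify : ∀ m : ℕ, ∀ c, IsExpansion T (xv T m) c → ∃ j ≤ m, c = tribSeq m j := by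
  have h1 : (1:ℝ) < T := by linarith
  have hT0 : (0:ℝ) < T := by linarith
  intro m
  induction m with
  | zero =>
    intro c hc
    have hxv0 : xv T 0 = 1/T + 1/(T^2-1) := by unfold xv; norm_num
    have hx0 : 1/(T*(T-1)) < xv T 0 := by rw [hxv0]; exact num_x0_gt h8 h9
    have hc0 : c 0 = 1 := exp_one_digit h1 hc hx0
    have s1 : IsExpansion T (T * xv T 0 - ((c 0 : ℕ):ℝ)) (fun n => c (n+1)) := exp_step h1 hc
    rw [hc0, alg0 h8 0] at s1
    have htail := unique_w h8 h9 (3*0) _ s1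
    refine ⟨0, le_refl 0, funext fun i => ?_⟩
    cases i with
    | zero => rw [hc0, trib_zero_head]
    | succ i =>
      exact (congrFun htail i).trans (congrFun (trib_zero_tail 0) i).symm
  | succ m ih =>
    intro c hc
    have hcle := hc.1 0
    rcases Nat.lt_or_ge (c 0) 1 with h0 | h0
    · -- c 0 = 0
      have hc0 : c 0 = 0 := by omega
      have s1 : IsExpansion T (T * xv T (m+1) - ((c 0 : ℕ):ℝ)) (fun n => c (n+1)) :=
        exp_step h1 hc
      rw [hc0, alg1 h8 m] at s1
      have hw := w_pos h8 (3*(m+1))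
      have hc1 : c 1 = 1 := exp_one_digit h1 s1 (by
        have := num_one_gt h8
        linarith)
      have s2 : IsExpansion T (T * (1 + T/(T^(3*(m+1))*(T^2-1))) - ((c 1 : ℕ):ℝ))
          (fun n => c (n+2)) := exp_step h1 s1
      rw [hc1, alg2 h8 m] at s2
      have hw2 := w_pos h8 (3*m+2)
      have hc2 : c 2 = 1 := exp_one_digit h1 s2 (by
        have := num_tm1_gt h8 h9 hq
        linarith)
      have s3 : IsExpansion T (T * ((T-1) + T/(T^(3*m+2)*(T^2-1))) - ((c 2 : ℕ):ℝ))
          (fun n => c (n+3)) := exp_step h1 s2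
      rw [hc2, alg3 h8 hq m] at s3
      obtain ⟨j, hj, htail⟩ := ih _ s3
      refine ⟨j+1, by omega, funext fun i => ?_⟩
      match i with
      | 0 => rw [hc0]; simp [tribSeq, show (0:ℕ) < 3*(j+1) from by omega]
      | 1 => rw [hc1]; simp [tribSeq, show (1:ℕ) < 3*(j+1) from by omega]
      | 2 => rw [hc2]; simp [tribSeq, show (2:ℕ) < 3*(j+1) from by omega]
      | (i+3) =>
        exact (congrFun htail i).trans (congrFun (trib_shift3 m j) i).symm
    · -- c 0 = 1
      have hc0 : c 0 = 1 := by omega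
      have s1 : IsExpansion T (T * xv T (m+1) - ((c 0 : ℕ):ℝ)) (fun n => c (n+1)) :=
        exp_step h1 hc
      rw [hc0, alg0 h8 (m+1)] at s1
      have htail := unique_w h8 h9 (3*(m+1)) _ s1
      refine ⟨0, by omega, funext fun i => ?_⟩
      cases i with
      | zero => rw [hc0, trib_zero_head]
      | succ i =>
        exact (congrFun htail i).trans (congrFun (trib_zero_tail (m+1)) i).symm

end Classify

end S19

namespace S19

variable {T : ℝ}

def oz (j : ℕ) : ℕ → ℕ := fun i =>
  if i < 3*j then (if i % 3 = 0 then 0 else 1) else if i = 3*j then 1 else 0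

def oInf : ℕ → ℕ := fun i => if i % 3 = 0 then 0 else 1

lemma oz_le (j n : ℕ) : oz j n ≤ 1 := by
  simp only [oz]; split_ifs <;> omega

lemma oInf_le (n : ℕ) : oInf n ≤ 1 := by
  simp only [oInf]; split_ifs <;> omega

lemma oz_shift3 (j : ℕ) : (fun i => oz (j+1) (i+3)) = oz j := by
  funext i; simp only [oz]; split_ifs <;> first | omega | exact False.elim (by assumption)

lemma oInf_shift3 : (fun i => oInf (i+3)) = oInf := by
  funext i; simp only [oInf]; split_ifs <;> first | omega | exact False.elim (by assumption)

lemma vl_zeroseq (h1 : 1 < T) : vl T (fun _ => 0) = 0 := by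
  unfold vl
  simp

lemma exp_zeroval (h1 : 1 < T) {c} (hc : IsExpansion T 0 c) : ∀ n, c n = 0 := by
  intro n
  have hT0 : (0:ℝ) < T := by linarith
  have hs := summable_aux h1 hc.1
  have hle : (c n : ℝ)/T^(n+1) ≤ 0 := by
    calc (c n : ℝ)/T^(n+1) ≤ ∑' k, (c k : ℝ)/T^(k+1) := Summable.le_tsum hs n (fun j _ => by positivity)
    _ = 0 := hc.2.symm
  have hge : (0:ℝ) ≤ (c n : ℝ)/T^(n+1) := by positivity
  have h := le_antisymm hle hge
  field_simp at h
  simpa using h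

section Inf
variable (h8 : (1.8:ℝ) < T) (h9 : T < 1.9) (hq : T^3 = T^2 + T + 1)

include h8 hq in
lemma vl_oz : ∀ j, vl T (oz j) = 1/T := by
  have h1 : (1:ℝ) < T := by linarith
  have hT0 : (0:ℝ) < T := by linarith
  intro j
  induction j with
  | zero =>
    have e := vl_succ h1 (oz_le 0)
    have ht : (fun n => oz 0 (n+1)) = (fun _ => 0) := by
      funext i; simp only [oz]; split_ifs <;> first | omega | exact False.elim (by assumption)
    rw [ht, vl_zeroseq h1] at e
    have h0 : oz 0 0 = 1 := by simp [oz]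
    rw [h0] at e
    rw [e]; push_cast; ring
  | succ j ih =>
    have e1 : vl T (oz (j+1)) = ((oz (j+1) 0 : ℝ) + vl T (fun n => oz (j+1) (n+1)))/T :=
      vl_succ h1 (oz_le (j+1))
    have e2 : vl T (fun n => oz (j+1) (n+1))
        = ((oz (j+1) 1 : ℝ) + vl T (fun n => oz (j+1) (n+2)))/T :=
      vl_succ h1 (fun n => oz_le (j+1) (n+1))
    have e3 : vl T (fun n => oz (j+1) (n+2))
        = ((oz (j+1) 2 : ℝ) + vl T (fun n => oz (j+1) (n+3)))/T :=
      vl_succ h1 (fun n => oz_le (j+1) (n+2))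
    have e4 : (fun n => oz (j+1) (n+3)) = oz j := oz_shift3 j
    have d0 : oz (j+1) 0 = 0 := by simp [oz, show (0:ℕ) < 3*(j+1) from by omega]
    have d1 : oz (j+1) 1 = 1 := by simp [oz, show (1:ℕ) < 3*(j+1) from by omega]
    have d2 : oz (j+1) 2 = 1 := by simp [oz, show (2:ℕ) < 3*(j+1) from by omega]
    rw [e2, e3, e4, ih, d0, d1, d2] at e1
    push_cast at e1
    rw [e1]
    field_simp
    linear_combination (-1 : ℝ) * hq

include h8 hq in
lemma vl_oInf : vl T oInf = 1/T := by
  have h1 : (1:ℝ) < T := by linarith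
  have hT0 : (0:ℝ) < T := by linarith
  have e1 : vl T oInf = ((oInf 0 : ℝ) + vl T (fun n => oInf (n+1)))/T :=
    vl_succ h1 oInf_le
  have e2 : vl T (fun n => oInf (n+1)) = ((oInf 1 : ℝ) + vl T (fun n => oInf (n+2)))/T :=
    vl_succ h1 (fun n => oInf_le (n+1))
  have e3 : vl T (fun n => oInf (n+2)) = ((oInf 2 : ℝ) + vl T (fun n => oInf (n+3)))/T :=
    vl_succ h1 (fun n => oInf_le (n+2))
  have e4 : (fun n => oInf (n+3)) = oInf := oInf_shift3
  have d0 : oInf 0 = 0 := by simp [oInf]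
  have d1 : oInf 1 = 1 := by simp [oInf]
  have d2 : oInf 2 = 1 := by simp [oInf]
  rw [e2, e3, e4, d0, d1, d2] at e1
  push_cast at e1
  field_simp at e1
  have h4 : (vl T oInf * T - 1) * (T + 1) = 0 := by
    linear_combination e1 - vl T oInf * hq
  rcases mul_eq_zero.mp h4 with h5 | h5
  · rw [eq_div_iff hT0.ne']
    linarith
  · exfalso; linarith

end Inf

end S19

namespace S19

variable {T : ℝ}

section Inf2
variable (h8 : (1.8:ℝ) < T) (h9 : T < 1.9) (hq : T^3 = T^2 + T + 1)

include h8 h9 hq in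
lemma step_inf {c} (hc : IsExpansion T (1/T) c) :
    c = oz 0 ∨ (c 0 = 0 ∧ c 1 = 1 ∧ c 2 = 1 ∧ IsExpansion T (1/T) (fun n => c (n+3))) := by
  have h1 : (1:ℝ) < T := by linarith
  have hT0 : (0:ℝ) < T := by linarith
  have hcle := hc.1 0
  rcases Nat.lt_or_ge (c 0) 1 with h0 | h0
  · right
    have hc0 : c 0 = 0 := by omega
    have s1 : IsExpansion T (T * (1/T) - ((c 0 : ℕ):ℝ)) (fun n => c (n+1)) := exp_step h1 hc
    rw [hc0] at s1
    have hval1 : T * (1/T) - ((0:ℕ):ℝ) = 1 := by push_cast; field_simp; norm_num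
    rw [hval1] at s1
    have hc1 : c 1 = 1 := exp_one_digit h1 s1 (num_one_gt h8)
    have s2 : IsExpansion T (T * 1 - ((c 1 : ℕ):ℝ)) (fun n => c (n+2)) := exp_step h1 s1
    rw [hc1] at s2
    have hval2 : T * 1 - ((1:ℕ):ℝ) = T - 1 := by push_cast; ring
    rw [hval2] at s2
    have hc2 : c 2 = 1 := exp_one_digit h1 s2 (num_tm1_gt h8 h9 hq)
    have s3 : IsExpansion T (T * (T-1) - ((c 2 : ℕ):ℝ)) (fun n => c (n+3)) := exp_step h1 s2
    rw [hc2] at s3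
    have hval3 : T * (T-1) - ((1:ℕ):ℝ) = 1/T := by
      push_cast
      rw [eq_div_iff hT0.ne']
      linear_combination hq
    rw [hval3] at s3
    exact ⟨hc0, hc1, hc2, s3⟩
  · left
    have hc0 : c 0 = 1 := by omega
    have s1 : IsExpansion T (T * (1/T) - ((c 0 : ℕ):ℝ)) (fun n => c (n+1)) := exp_step h1 hc
    rw [hc0] at s1
    have hval1 : T * (1/T) - ((1:ℕ):ℝ) = 0 := by push_cast; field_simp; norm_num
    rw [hval1] at s1
    have htail := exp_zeroval h1 s1
    funext i
    cases i with
    | zero => rw [hc0]; simp [oz]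
    | succ i =>
      have : c (i+1) = 0 := htail i
      rw [this]
      simp only [oz]
      split_ifs <;> first | rfl | omega | exact False.elim (by assumption)
  
include h8 h9 hq in
lemma classify_inf_aux : ∀ n : ℕ, ∀ c, IsExpansion T (1/T) c → c n ≠ oInf n →
    ∃ j, c = oz j := by
  intro n
  induction n using Nat.strong_induction_on with
  | _ n ih =>
    intro c hc hne
    rcases step_inf h8 h9 hq hc with h | ⟨h0, h1', h2, hrec⟩
    · exact ⟨0, h⟩
    · match n with
      | 0 => exact absurd (by rw [h0]; simp [oInf]) hne
      | 1 => exact absurd (by rw [h1']; simp [oInf]) hne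
      | 2 => exact absurd (by rw [h2]; simp [oInf]) hne
      | (n+3) =>
        have hoi : oInf (n+3) = oInf n := by
          simp only [oInf]; split_ifs <;> first | rfl | omega
        have hne' : (fun i => c (i+3)) n ≠ oInf n := by
          simpa [hoi] using hne
        obtain ⟨j, htail⟩ := ih n (by omega) _ hrec hne'
        refine ⟨j+1, funext fun i => ?_⟩
        match i with
        | 0 => rw [h0]; simp [oz, show (0:ℕ) < 3*(j+1) from by omega]
        | 1 => rw [h1']; simp [oz, show (1:ℕ) < 3*(j+1) from by omega]
        | 2 => rw [h2]; simp [oz, show (2:ℕ) < 3*(j+1) from by omega]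
        | (i+3) =>
          exact (congrFun htail i).trans (congrFun (oz_shift3 j) i).symm

include h8 h9 hq in
lemma classify_inf {c} (hc : IsExpansion T (1/T) c) : (∃ j, c = oz j) ∨ c = oInf := by
  by_cases h : c = oInf
  · exact Or.inr h
  · left
    have : ∃ n, c n ≠ oInf n := by
      by_contra hco
      push_neg at hco
      exact h (funext hco)
    obtain ⟨n, hn⟩ := this
    exact classify_inf_aux h8 h9 hq n c hc hn

end Inf2

lemma oz_inj : Function.Injective oz := by
  have key : ∀ j j', j < j' → oz j ≠ oz j' := by
    intro j j' hlt heq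
    have h1 : oz j (3*j) = 1 := by simp [oz]
    have h2 : oz j' (3*j) = 0 := by
      simp [oz, show 3*j < 3*j' from by omega]
    rw [heq] at h1
    omega
  intro j j' heq
  rcases Nat.lt_trichotomy j j' with h | h | h
  · exact absurd heq (key _ _ h)
  · exact h
  · exact absurd heq.symm (key _ _ h)

lemma trib_inj (m : ℕ) : Function.Injective (tribSeq m) := by
  have key : ∀ j j', j < j' → tribSeq m j ≠ tribSeq m j' := by
    intro j j' hlt heq
    have h1 : tribSeq m j (3*j) = 1 := by
      simp [tribSeq]
    have h2 : tribSeq m j' (3*j) = 0 := by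
      simp [tribSeq, show 3*j < 3*j' from by omega]
    rw [heq] at h1
    omega
  intro j j' heq
  rcases Nat.lt_trichotomy j j' with h | h | h
  · exact absurd heq (key _ _ h)
  · exact h
  · exact absurd heq.symm (key _ _ h)

end S19

open S19 in
theorem stmt19 (T : ℝ) (hT : T ∈ Set.Ioo (1:ℝ) 2)
    (hTeq : T ^ 3 = T ^ 2 + T + 1) :
    (∀ m : ℕ, 1 ≤ m → ∃ x ∈ Set.Icc (0:ℝ) (1 / (T - 1)),
      Cardinal.mk (expansionsOf T x) = m) ∧
    (∀ m : ℕ, 1 ≤ m → ∃ x ∈ Set.Icc (0:ℝ) (1 / (T - 1)),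
      IsExpansion T x (tribSeq m 0) ∧
      expansionsOf T x = {a : ℕ → ℕ | ∃ j ≤ m, a = tribSeq m j} ∧
      Cardinal.mk (expansionsOf T x) = ((m + 1 : ℕ) : Cardinal)) ∧
    (∃ x ∈ Set.Icc (0:ℝ) (1 / (T - 1)),
      Cardinal.mk (expansionsOf T x) = Cardinal.aleph0) ∧
    (∀ m : ℕ, 2 ≤ m → T ∈ B m) ∧ T ∈ Baleph0 := by
  obtain ⟨hT1, hT2⟩ := hT
  have h8 : (1.8:ℝ) < T := by nlinarith [sq_nonneg (T - 1.8), sq_nonneg (T+1)]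
  have h9 : T < 1.9 := by nlinarith [sq_nonneg (T - 1.9), sq_nonneg (T+1)]
  have hq : T^3 = T^2 + T + 1 := hTeq
  have hT0 : (0:ℝ) < T := by linarith
  have hG : (1 + Real.sqrt 5)/2 < T := by
    have h5 : Real.sqrt 5 < 2.4 := by
      rw [show (2.4:ℝ) = 2.4 from rfl] at *
      have := Real.sqrt_lt' (x := 5) (y := (2.4:ℝ)) (by norm_num)
      rw [this]
      norm_num
    linarith
  -- main package for xv T m
  have hmain : ∀ m : ℕ, xv T m ∈ Set.Icc (0:ℝ) (1/(T-1)) ∧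
      IsExpansion T (xv T m) (tribSeq m 0) ∧
      expansionsOf T (xv T m) = {a : ℕ → ℕ | ∃ j ≤ m, a = tribSeq m j} ∧
      Cardinal.mk (expansionsOf T (xv T m)) = ((m + 1 : ℕ) : Cardinal) := by
    intro m
    have hexp : IsExpansion T (xv T m) (tribSeq m 0) :=
      ⟨trib_le m 0, (vl_trib hT1 h8 hq m 0 (Nat.zero_le m)).symm⟩
    have hIcc : xv T m ∈ Set.Icc (0:ℝ) (1/(T-1)) :=
      ⟨exp_nonneg hT1 hexp, exp_le hT1 hexp⟩
    have hset : expansionsOf T (xv T m) = {a : ℕ → ℕ | ∃ j ≤ m, a = tribSeq m j} := by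
      ext a
      constructor
      · intro ha
        exact classify h8 h9 hq m a ha
      · rintro ⟨j, hj, rfl⟩
        exact ⟨trib_le m j, (vl_trib hT1 h8 hq m j hj).symm⟩
    refine ⟨hIcc, hexp, hset, ?_⟩
    rw [hset]
    have hseteq : {a : ℕ → ℕ | ∃ j ≤ m, a = tribSeq m j} = tribSeq m '' (Set.Iic m) := by
      ext a
      simp only [Set.mem_image, Set.mem_Iic, Set.mem_setOf_eq]
      constructor
      · rintro ⟨j, hj, rfl⟩; exact ⟨j, hj, rfl⟩
      · rintro ⟨j, hj, rfl⟩; exact ⟨j, hj, rfl⟩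
    rw [hseteq, Cardinal.mk_image_eq_of_injOn _ _ ((trib_inj m).injOn)]
    rw [← Finset.coe_Iic]
    simp [Cardinal.mk_coe_finset]
  -- infinite package for 1/T
  have hinf : (1/T) ∈ Set.Icc (0:ℝ) (1/(T-1)) ∧
      Cardinal.mk (expansionsOf T (1/T)) = Cardinal.aleph0 := by
    have hexp0 : IsExpansion T (1/T) (oz 0) := ⟨oz_le 0, (vl_oz h8 hq 0).symm⟩
    have hIcc : (1/T) ∈ Set.Icc (0:ℝ) (1/(T-1)) :=
      ⟨exp_nonneg hT1 hexp0, exp_le hT1 hexp0⟩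
    have hset : expansionsOf T (1/T) = insert oInf (Set.range oz) := by
      ext a
      constructor
      · intro ha
        rcases classify_inf h8 h9 hq ha with ⟨j, rfl⟩ | rfl
        · exact Set.mem_insert_of_mem _ (Set.mem_range_self j)
        · exact Set.mem_insert _ _
      · intro ha
        rcases ha with rfl | ⟨j, rfl⟩
        · exact ⟨oInf_le, (vl_oInf h8 hq).symm⟩
        · exact ⟨oz_le j, (vl_oz h8 hq j).symm⟩
    refine ⟨hIcc, ?_⟩
    rw [hset]
    apply le_antisymm
    · have : (insert oInf (Set.range oz)).Countable :=
        (Set.countable_range oz).insert oInf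
      haveI := this.to_subtype
      exact Cardinal.mk_le_aleph0
    · rw [Cardinal.aleph0_le_mk_iff, Set.infinite_coe_iff]
      exact Set.infinite_of_injective_forall_mem oz_inj
        (fun j => Set.mem_insert_of_mem _ (Set.mem_range_self j))
  refine ⟨?_, ?_, ?_, ?_, ?_⟩
  · intro m hm
    obtain ⟨hIcc, _, _, hcard⟩ := hmain (m - 1)
    refine ⟨xv T (m-1), hIcc, ?_⟩
    rw [hcard]
    congr 1
    omega
  · intro m _
    obtain ⟨hIcc, hexp, hset, hcard⟩ := hmain m
    exact ⟨xv T m, hIcc, hexp, hset, hcard⟩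
  · exact ⟨1/T, hinf.1, hinf.2⟩
  · intro m hm
    obtain ⟨hIcc, _, _, hcard⟩ := hmain (m - 1)
    refine ⟨⟨hG, hT2⟩, xv T (m-1), hIcc, ?_⟩
    rw [hcard]
    congr 1
    omega
  · exact ⟨⟨hG, hT2⟩, 1/T, hinf.1, hinf.2⟩
end
end
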